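/- arXiv:2003.08065 — 2 statements merged into one kernel-verified Lean document; each statement's English description precedes it below -/
import Mathlib

section
/- If θ : Ω → ℝ is C² on a connected open Ω ⊂ ℝ³ with θ depending only on (x₁,x₂), and the matrix field R_θ (rotation by θ in the first two coordinates) satisfies curl R_θ = −α row-wise for a constant matrix α ∈ ℝ^{3×3}, then α = 0. -/
open Matrix Real

noncomputable def pd (j : Fin 3) (f : (Fin 3 → ℝ) → ℝ) (x : Fin 3 → ℝ) : ℝ :=
  fderiv ℝ f x (Pi.single j 1)

noncomputable def curlM (M : (Fin 3 → ℝ) → Matrix (Fin 3) (Fin 3) ℝ)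
    (x : Fin 3 → ℝ) : Matrix (Fin 3) (Fin 3) ℝ :=
  Matrix.of fun i j =>
    if j = 0 then pd 1 (fun y => M y i 2) x - pd 2 (fun y => M y i 1) x
    else if j = 1 then pd 2 (fun y => M y i 0) x - pd 0 (fun y => M y i 2) x
    else pd 0 (fun y => M y i 1) x - pd 1 (fun y => M y i 0) x

noncomputable def divM (M : (Fin 3 → ℝ) → Matrix (Fin 3) (Fin 3) ℝ)
    (x : Fin 3 → ℝ) (i : Fin 3) : ℝ :=
  ∑ j, pd j (fun y => M y i j) x

noncomputable def lap (f : (Fin 3 → ℝ) → ℝ) (x : Fin 3 → ℝ) : ℝ :=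
  ∑ j, pd j (fun y => pd j f y) x

/-- A matrix field is C¹ on a set if each entry is. -/
def C1On (M : (Fin 3 → ℝ) → Matrix (Fin 3) (Fin 3) ℝ) (Ω : Set (Fin 3 → ℝ)) : Prop :=
  ∀ i j, ContDiffOn ℝ 1 (fun x => M x i j) Ω

noncomputable def Rmat (t : ℝ) : Matrix (Fin 3) (Fin 3) ℝ :=
  !![Real.cos t, -Real.sin t, 0; Real.sin t, Real.cos t, 0; 0, 0, 1]

lemma pd_cos' {θ : (Fin 3 → ℝ) → ℝ} {x : Fin 3 → ℝ} (h : DifferentiableAt ℝ θ x)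
    (v : Fin 3 → ℝ) :
    fderiv ℝ (fun y => Real.cos (θ y)) x v = -Real.sin (θ x) * fderiv ℝ θ x v := by
  have h2 := ((Real.hasDerivAt_cos (θ x)).comp_hasFDerivAt x h.hasFDerivAt).fderiv
  rw [Function.comp_def] at h2
  rw [h2]; simp

lemma pd_sin' {θ : (Fin 3 → ℝ) → ℝ} {x : Fin 3 → ℝ} (h : DifferentiableAt ℝ θ x)
    (v : Fin 3 → ℝ) :
    fderiv ℝ (fun y => Real.sin (θ y)) x v = Real.cos (θ x) * fderiv ℝ θ x v := by
  have h2 := ((Real.hasDerivAt_sin (θ x)).comp_hasFDerivAt x h.hasFDerivAt).fderiv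
  rw [Function.comp_def] at h2
  rw [h2]; simp

lemma pd_apply' {θ : (Fin 3 → ℝ) → ℝ} {x : Fin 3 → ℝ}
    (h : DifferentiableAt ℝ (fderiv ℝ θ) x) (v w : Fin 3 → ℝ) :
    fderiv ℝ (fun y => fderiv ℝ θ y v) x w = fderiv ℝ (fderiv ℝ θ) x w v := by
  have h2 := ((ContinuousLinearMap.apply ℝ ℝ v).hasFDerivAt.comp x h.hasFDerivAt).fderiv
  rw [Function.comp_def] at h2
  simp only [ContinuousLinearMap.apply_apply] at h2
  rw [h2]; rfl

/-- Derivative of `p·cos θ + q·sin θ`. -/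
lemma pd_trig {θ : (Fin 3 → ℝ) → ℝ} {x : Fin 3 → ℝ} (h : DifferentiableAt ℝ θ x)
    (p q : ℝ) (v : Fin 3 → ℝ) :
    fderiv ℝ (fun y => p * Real.cos (θ y) + q * Real.sin (θ y)) x v
      = (q * Real.cos (θ x) - p * Real.sin (θ x)) * fderiv ℝ θ x v := by
  have hc : DifferentiableAt ℝ (fun y => Real.cos (θ y)) x :=
    ((Real.hasDerivAt_cos (θ x)).comp_hasFDerivAt x h.hasFDerivAt).differentiableAt
  have hs : DifferentiableAt ℝ (fun y => Real.sin (θ y)) x :=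
    ((Real.hasDerivAt_sin (θ x)).comp_hasFDerivAt x h.hasFDerivAt).differentiableAt
  rw [fderiv_fun_add (hc.const_mul p) (hs.const_mul q), fderiv_const_mul hc p,
    fderiv_const_mul hs q]
  simp only [ContinuousLinearMap.add_apply, ContinuousLinearMap.smul_apply, smul_eq_mul,
    pd_cos' h, pd_sin' h]
  ring

set_option maxHeartbeats 1000000 in
/-- Acharya's theorem: if `θ` is C² on a connected open `Ω ⊆ ℝ³`, depends only on
`(x₁, x₂)`, and `curl R_θ = -α` row-wise for a constant matrix `α`, then `α = 0`. -/
theorem stmt6 (Ω : Set (Fin 3 → ℝ)) (hΩ : IsOpen Ω) (hconn : IsConnected Ω)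
    (θ : (Fin 3 → ℝ) → ℝ) (hθ : ContDiffOn ℝ 2 θ Ω)
    (h2D : ∀ x y : Fin 3 → ℝ, x 0 = y 0 → x 1 = y 1 → θ x = θ y)
    (α : Matrix (Fin 3) (Fin 3) ℝ)
    (hcurl : ∀ x ∈ Ω, curlM (fun y => Rmat (θ y)) x = -α) :
    α = 0 := by
  obtain ⟨x₀, hx₀⟩ := hconn.nonempty
  have hCA : ∀ x ∈ Ω, ContDiffAt ℝ 2 θ x := fun x hx => hθ.contDiffAt (hΩ.mem_nhds hx)
  have hd : ∀ x ∈ Ω, DifferentiableAt ℝ θ x := fun x hx =>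
    (hCA x hx).differentiableAt two_ne_zero
  -- the derivative in direction e₂ vanishes
  have hpd2 : ∀ x ∈ Ω, fderiv ℝ θ x (Pi.single 2 1) = 0 := by
    intro x hx
    have hc : HasDerivAt (fun t : ℝ => x + t • (Pi.single 2 1 : Fin 3 → ℝ))
        (Pi.single 2 1) 0 := by
      simpa using ((hasDerivAt_id (0:ℝ)).smul_const (Pi.single 2 1 : Fin 3 → ℝ)).const_add x
    have hd2 : HasFDerivAt θ (fderiv ℝ θ x) (x + (0:ℝ) • (Pi.single 2 1 : Fin 3 → ℝ)) := by
      simpa using (hd x hx).hasFDerivAt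
    have h := hd2.comp_hasDerivAt 0 hc
    have heq : (fun t : ℝ => θ (x + t • (Pi.single 2 1 : Fin 3 → ℝ))) = fun _ => θ x := by
      funext t
      apply h2D
      · simp [Pi.single_eq_of_ne (show (0:Fin 3) ≠ 2 by decide)]
      · simp [Pi.single_eq_of_ne (show (1:Fin 3) ≠ 2 by decide)]
    rw [Function.comp_def, heq] at h
    exact ((hasDerivAt_const (0:ℝ) (θ x)).unique h).symm
  -- shorthand
  set a := α 0 2 with ha
  set b := α 1 2 with hb
  -- the key equations on Ω
  have key : ∀ x ∈ Ω,
      fderiv ℝ θ x (Pi.single 0 1) = a * Real.cos (θ x) + b * Real.sin (θ x) ∧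
      fderiv ℝ θ x (Pi.single 1 1) = b * Real.cos (θ x) + (-a) * Real.sin (θ x) := by
    intro x hx
    have h02 := congrFun (congrFun (hcurl x hx) 0) 2
    have h12 := congrFun (congrFun (hcurl x hx) 1) 2
    simp [curlM, Rmat, pd] at h02 h12
    rw [pd_sin' (hd x hx), pd_cos' (hd x hx)] at h02 h12
    constructor
    · linear_combination (-(Real.cos (θ x))) * h02 + (-(Real.sin (θ x))) * h12 -
        (fderiv ℝ θ x (Pi.single 0 1)) * (Real.sin_sq_add_cos_sq (θ x))
    · linear_combination (Real.sin (θ x)) * h02 + (-(Real.cos (θ x))) * h12 -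
        (fderiv ℝ θ x (Pi.single 1 1)) * (Real.sin_sq_add_cos_sq (θ x))
  -- all other entries of α vanish
  have h00 := congrFun (congrFun (hcurl x₀ hx₀) 0) 0
  have h01 := congrFun (congrFun (hcurl x₀ hx₀) 0) 1
  have h10 := congrFun (congrFun (hcurl x₀ hx₀) 1) 0
  have h11 := congrFun (congrFun (hcurl x₀ hx₀) 1) 1
  have h20 := congrFun (congrFun (hcurl x₀ hx₀) 2) 0
  have h21 := congrFun (congrFun (hcurl x₀ hx₀) 2) 1
  have h22 := congrFun (congrFun (hcurl x₀ hx₀) 2) 2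
  simp only [curlM, Rmat, pd] at h00 h01 h10 h11 h20 h21 h22
  simp at h00 h01 h10 h11 h20 h21 h22
  rw [pd_sin' (hd x₀ hx₀), hpd2 x₀ hx₀] at h00 h11
  rw [pd_cos' (hd x₀ hx₀), hpd2 x₀ hx₀] at h01 h10
  -- second derivative symmetry at x₀
  have hdf : DifferentiableAt ℝ (fderiv ℝ θ) x₀ :=
    ((hCA x₀ hx₀).fderiv_right (m := 1) one_add_one_eq_two.le).differentiableAt one_ne_zero
  have hsymm := ((hCA x₀ hx₀).isSymmSndFDerivAt minSmoothness_of_isRCLikeNormedField.le).eq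
      (Pi.single 0 1) (Pi.single 1 1)
  -- compute the two mixed partials
  have hmemF : (fun y => fderiv ℝ θ y (Pi.single 0 1)) =ᶠ[nhds x₀]
      (fun y => a * Real.cos (θ y) + b * Real.sin (θ y)) :=
    Filter.eventuallyEq_of_mem (hΩ.mem_nhds hx₀) (fun y hy => (key y hy).1)
  have hmemG : (fun y => fderiv ℝ θ y (Pi.single 1 1)) =ᶠ[nhds x₀]
      (fun y => b * Real.cos (θ y) + (-a) * Real.sin (θ y)) :=
    Filter.eventuallyEq_of_mem (hΩ.mem_nhds hx₀) (fun y hy => (key y hy).2)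
  set F := a * Real.cos (θ x₀) + b * Real.sin (θ x₀) with hF
  set G := b * Real.cos (θ x₀) + (-a) * Real.sin (θ x₀) with hG
  have e1 : fderiv ℝ (fderiv ℝ θ) x₀ (Pi.single 1 1) (Pi.single 0 1) = G * G := by
    rw [← pd_apply' hdf, hmemF.fderiv_eq, pd_trig (hd x₀ hx₀), (key x₀ hx₀).2]
    rw [← hG]; ring
  have e2 : fderiv ℝ (fderiv ℝ θ) x₀ (Pi.single 0 1) (Pi.single 1 1) = -(F * F) := by
    rw [← pd_apply' hdf, hmemG.fderiv_eq, pd_trig (hd x₀ hx₀), (key x₀ hx₀).1]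
    rw [← hF]; ring
  -- symmetry forces F = G = 0
  have hFG : F = 0 ∧ G = 0 := by
    have : G * G = -(F * F) := by rw [← e1, ← e2, hsymm]
    constructor <;> nlinarith
  -- hence a = b = 0
  have hab : a = 0 ∧ b = 0 := by
    have h1 := hFG.1
    have h2 := hFG.2
    rw [hF] at h1; rw [hG] at h2
    have hsc := Real.sin_sq_add_cos_sq (θ x₀)
    constructor
    · linear_combination (Real.cos (θ x₀)) * h1 - (Real.sin (θ x₀)) * h2 - a * hsc
    · linear_combination (Real.sin (θ x₀)) * h1 + (Real.cos (θ x₀)) * h2 - b * hsc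
  -- conclude
  have l00 : α 0 0 = 0 := by linarith
  have l01 : α 0 1 = 0 := by linarith
  have l10 : α 1 0 = 0 := by linarith
  have l11 : α 1 1 = 0 := by linarith
  ext i j
  fin_cases i <;> fin_cases j <;>
    simp only [Matrix.zero_apply] <;>
    first
    | exact hab.1
    | exact hab.2
    | exact l00
    | exact l01
    | exact l10
    | exact l11
    | exact h20
    | exact h21
    | exact h22
end

section
/- Let Ω ⊂ ℝ² be open and connected and θ : Ω → ℝ be C¹ such that both ∂₁(cos θ) − ∂₂(sin θ) and ∂₁(sin θ) + ∂₂(cos θ) equal prescribed constants a, b respectively, and also ∂₂(cos θ) and ∂₁(cos θ) (resp. of sin θ) satisfy curl-type constancy: ∂₁(sin θ) − ∂₂(cos θ) = c and ∂₁(cos θ) + ∂₂(sin θ) = d for constants c, d. If (a,b,c,d) ≠ (0,0,0,0), then no such θ exists; equivalently, any C¹ function θ on connected Ω with all four of these expressions constant must have all four constants equal to zero. -/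
noncomputable def pd2 (j : Fin 2) (f : (Fin 2 → ℝ) → ℝ) (x : Fin 2 → ℝ) : ℝ :=
  fderiv ℝ f x (Pi.single j 1)

/-!
Write `u = cos θ`, `v = sin θ`. The four hypotheses say exactly that every partial derivative
`∂ⱼu = p`, `∂ⱼv = q` is constant. Differentiating `u² + v² = 1` along `eⱼ` gives `u p + v q = 0`,
and differentiating this once more gives `p² + q² = 0`.
-/

section

variable {E F : Type*} [NormedAddCommGroup E] [NormedSpace ℝ E]
  [NormedAddCommGroup F] [NormedSpace ℝ F]

lemma HasFDerivAt.eq_zero_of_eqOn_const {f : E → F} {f' : E →L[ℝ] F} {Ω : Set E} {x : E}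
    {c : F} (hf : HasFDerivAt f f' x) (hΩ : IsOpen Ω) (hx : x ∈ Ω)
    (hc : Set.EqOn f (fun _ => c) Ω) : f' = 0 :=
  hf.unique <| (hasFDerivAt_const c x).congr_of_eventuallyEq
    (Filter.eventuallyEq_of_mem (hΩ.mem_nhds hx) hc)

lemma eq_zero_of_fderiv_apply_eq_of_sq_add_sq_eq_one {Ω : Set E} (hΩ : IsOpen Ω)
    (hne : Ω.Nonempty) {u v : E → ℝ} (hu : DifferentiableOn ℝ u Ω)
    (hv : DifferentiableOn ℝ v Ω) (huv : ∀ x ∈ Ω, u x ^ 2 + v x ^ 2 = 1) (w : E) {p q : ℝ}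
    (hp : ∀ x ∈ Ω, fderiv ℝ u x w = p) (hq : ∀ x ∈ Ω, fderiv ℝ v x w = q) :
    p = 0 ∧ q = 0 := by
  have hu' x (hx : x ∈ Ω) : HasFDerivAt u (fderiv ℝ u x) x :=
    (hu.differentiableAt (hΩ.mem_nhds hx)).hasFDerivAt
  have hv' x (hx : x ∈ Ω) : HasFDerivAt v (fderiv ℝ v x) x :=
    (hv.differentiableAt (hΩ.mem_nhds hx)).hasFDerivAt
  have horth : ∀ x ∈ Ω, u x * p + v x * q = 0 := by
    intro x hx
    have hderiv := (((hu' x hx).pow 2).add ((hv' x hx).pow 2)).eq_zero_of_eqOn_const hΩ hx huv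
    have := congrArg (· w) hderiv
    simp only [add_apply, smul_apply, smul_eq_mul, zero_apply, hp x hx, hq x hx] at this
    linear_combination this / 2
  obtain ⟨x, hx⟩ := hne
  have hderiv :=
    (((hu' x hx).mul_const p).add ((hv' x hx).mul_const q)).eq_zero_of_eqOn_const hΩ hx horth
  have hpq : p ^ 2 + q ^ 2 = 0 := by
    have := congrArg (· w) hderiv
    simp only [add_apply, smul_apply, smul_eq_mul, zero_apply, hp x hx, hq x hx] at this
    linear_combination this
  exact ⟨by nlinarith, by nlinarith⟩

end

/-- Algebraic core of Acharya's computation: if the four listed first-order combinations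
of `cos θ` and `sin θ` are constant on a connected open `Ω ⊆ ℝ²`, all four constants
vanish. -/
theorem stmt15 (Ω : Set (Fin 2 → ℝ)) (hΩ : IsOpen Ω) (hconn : IsConnected Ω)
    (θ : (Fin 2 → ℝ) → ℝ) (hθ : ContDiffOn ℝ 1 θ Ω)
    (a b c d : ℝ)
    (ha : ∀ x ∈ Ω, pd2 0 (fun y => Real.cos (θ y)) x - pd2 1 (fun y => Real.sin (θ y)) x = a)
    (hb : ∀ x ∈ Ω, pd2 0 (fun y => Real.sin (θ y)) x + pd2 1 (fun y => Real.cos (θ y)) x = b)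
    (hc : ∀ x ∈ Ω, pd2 0 (fun y => Real.sin (θ y)) x - pd2 1 (fun y => Real.cos (θ y)) x = c)
    (hd : ∀ x ∈ Ω, pd2 0 (fun y => Real.cos (θ y)) x + pd2 1 (fun y => Real.sin (θ y)) x = d) :
    a = 0 ∧ b = 0 ∧ c = 0 ∧ d = 0 := by
  have hdiff := hθ.differentiableOn one_ne_zero
  have vanish := eq_zero_of_fderiv_apply_eq_of_sq_add_sq_eq_one hΩ hconn.nonempty hdiff.cos
    hdiff.sin (fun x _ => Real.cos_sq_add_sin_sq (θ x))
  obtain ⟨h₁, h₂⟩ := vanish (Pi.single 0 1)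
    (fun x hx => show pd2 0 _ x = (a + d) / 2 by linarith [ha x hx, hd x hx])
    (fun x hx => show pd2 0 _ x = (b + c) / 2 by linarith [hb x hx, hc x hx])
  obtain ⟨h₃, h₄⟩ := vanish (Pi.single 1 1)
    (fun x hx => show pd2 1 _ x = (b - c) / 2 by linarith [hb x hx, hc x hx])
    (fun x hx => show pd2 1 _ x = (d - a) / 2 by linarith [ha x hx, hd x hx])
  exact ⟨by linarith, by linarith, by linarith, by linarith⟩
end
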